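/- Let δ ∈ (0,ℓ], let p, q ∈ C¹([0,ℓ];ℝ) and a ∈ C²([0,ℓ];ℝ) with a > 0 on [0,ℓ]. Suppose K ∈ C²(closure Ω_δ; ℝ) satisfies a(x)∂_x²K(x,y) − ∂_y²(a(y)K(x,y)) = (q(x) − p(y))K(x,y) in Ω_δ, a(0)∂_yK(x,0) + a'(0)K(x,0) = 0 for 0 < x < δ, and K(x,x) = 0 for 0 ≤ x ≤ δ. Then K ≡ 0 on closure Ω_δ (uniqueness for the Goursat problem with zero diagonal data). -/

import Mathlib

/-!
Energy method. With `c₀ = a'(0) / a(0)`, the function `V(x, y) = exp (c₀ y) K(x, y)` solves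
`a(x) ∂ₓ²V = a(y) ∂ᵧ²V + b(y) ∂ᵧV + c(x, y) V` in the triangle for continuous coefficients `b`,
`c`, with the Neumann condition `∂ᵧV(x, 0) = 0` and `V(x, x) = 0`. Consider the energy
`E(x) = ∫₀ˣ (a(x) (∂ₓV)² + a(y) (∂ᵧV)² + V²) dy`, with `E(0) = 0`. In `E'(x)`, integrating the
term `2 a(y) ∂ᵧV ∂ₓ∂ᵧV` by parts in `y` produces no boundary term at `y = 0`, and at `y = x` a
boundary term that cancels the diagonal contribution `a(x) ((∂ₓV)² + (∂ᵧV)²)` of `E'`, because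
`∂ₓV = -∂ᵧV` on the diagonal. What is left is bounded by `C E(x)`, so `E ≡ 0` by Grönwall's
inequality, hence `V ≡ 0`.
-/

open Set Filter Topology MeasureTheory intervalIntegral

namespace GoursatUniqueness

lemma abs_sub_sub_mul_le_of_hasDerivWithinAt {f f' : ℝ → ℝ} {x₀ x C : ℝ} (hx : x₀ ≤ x)
    (hf : ∀ s ∈ Icc x₀ x, HasDerivWithinAt f (f' s) (Icc x₀ x) s)
    (hC : ∀ s ∈ Icc x₀ x, |f' s - f' x₀| ≤ C) :
    |f x - f x₀ - (x - x₀) * f' x₀| ≤ C * (x - x₀) := by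
  have := (convex_Icc x₀ x).norm_image_sub_le_of_norm_hasDerivWithin_le
    (f := fun s => f s - s * f' x₀) (fun s hs => ((hf s hs).sub
      ((hasDerivWithinAt_id s _).mul_const _)).congr_deriv (by ring)) hC
    ⟨le_rfl, hx⟩ ⟨hx, le_rfl⟩
  rw [Real.norm_of_nonneg (sub_nonneg.2 hx)] at this
  rwa [show f x - f x₀ - (x - x₀) * f' x₀ = f x - x * f' x₀ - (f x₀ - x₀ * f' x₀) by ring]

lemma hasDerivWithinAt_integral_of_continuousOn_deriv {J Jx : ℝ → ℝ → ℝ} {a b x₀ x₁ : ℝ}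
    (hab : a ≤ b)
    (hJ : ∀ x ∈ Icc x₀ x₁, ∀ y ∈ Icc a b, HasDerivWithinAt (J · y) (Jx x y) (Icc x₀ x₁) x)
    (hJx : ContinuousOn (fun z : ℝ × ℝ => Jx z.1 z.2) (Icc x₀ x₁ ×ˢ Icc a b))
    (hint : ∀ x ∈ Icc x₀ x₁, IntervalIntegrable (J x) volume a b) :
    HasDerivWithinAt (fun x => ∫ y in a..b, J x y) (∫ y in a..b, Jx x₀ y) (Icc x₀ x₁) x₀ := by
  rw [hasDerivWithinAt_iff_isLittleO, Asymptotics.isLittleO_iff]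
  intro ε hε
  have hba : 0 < b - a + 1 := by linarith
  obtain ⟨r, hr, hJxr⟩ := Metric.uniformContinuousOn_iff_le.mp
    ((isCompact_Icc.prod isCompact_Icc).uniformContinuousOn_of_continuous hJx) (ε / (b - a + 1))
    (by positivity)
  filter_upwards [inter_mem_nhdsWithin (Icc x₀ x₁) (Metric.closedBall_mem_nhds x₀ hr)]
    with x ⟨hxI, hxr⟩
  have hx₀ : x₀ ∈ Icc x₀ x₁ := ⟨le_rfl, hxI.1.trans hxI.2⟩
  have hsub : Icc x₀ x ⊆ Icc x₀ x₁ := Icc_subset_Icc le_rfl hxI.2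
  have hxx₀ : x - x₀ ≤ r := by
    simpa [Real.dist_eq, abs_of_nonneg (sub_nonneg.2 hxI.1)] using hxr
  have hlin : ∀ y ∈ Icc a b,
      |J x y - J x₀ y - (x - x₀) * Jx x₀ y| ≤ ε / (b - a + 1) * (x - x₀) := fun y hy =>
    abs_sub_sub_mul_le_of_hasDerivWithinAt hxI.1
      (fun s hs => (hJ s (hsub hs) y hy).mono hsub) fun s hs => by
        rw [← Real.dist_eq]
        refine hJxr (s, y) ⟨hsub hs, hy⟩ (x₀, y) ⟨hx₀, hy⟩ ?_
        rw [Prod.dist_eq, dist_self, Real.dist_eq, abs_of_nonneg (sub_nonneg.2 hs.1)]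
        exact max_le (by linarith [hs.2]) hr.le
  have hJx₀ : IntervalIntegrable (Jx x₀) volume a b :=
    (hJx.comp (continuous_const.prodMk continuous_id).continuousOn
      fun y hy => ⟨hx₀, hy⟩).intervalIntegrable_of_Icc hab
  have hε' : ε / (b - a + 1) * (b - a) ≤ ε := by
    rw [div_mul_eq_mul_div, div_le_iff₀ hba]
    nlinarith
  calc ‖(∫ y in a..b, J x y) - (∫ y in a..b, J x₀ y) - (x - x₀) • ∫ y in a..b, Jx x₀ y‖
      = ‖∫ y in a..b, (J x y - J x₀ y - (x - x₀) * Jx x₀ y)‖ := by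
        rw [intervalIntegral.integral_sub ((hint x hxI).sub (hint x₀ hx₀)) (hJx₀.const_mul _),
          intervalIntegral.integral_sub (hint x hxI) (hint x₀ hx₀),
          intervalIntegral.integral_const_mul, smul_eq_mul]
    _ ≤ ε / (b - a + 1) * (x - x₀) * |b - a| := norm_integral_le_of_norm_le_const fun y hy =>
        hlin y (Ioc_subset_Icc_self (by rwa [uIoc_of_le hab] at hy))
    _ = ε / (b - a + 1) * (b - a) * ‖x - x₀‖ := by
        rw [abs_of_nonneg (sub_nonneg.2 hab), Real.norm_of_nonneg (sub_nonneg.2 hxI.1)]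
        ring
    _ ≤ ε * ‖x - x₀‖ := mul_le_mul_of_nonneg_right hε' (norm_nonneg _)

lemma hasDerivWithinAt_integral_of_continuousWithinAt_diag {J : ℝ → ℝ → ℝ} {x₀ : ℝ}
    (hJ : ContinuousWithinAt (fun z : ℝ × ℝ => J z.1 z.2) {z | x₀ ≤ z.2 ∧ z.2 ≤ z.1} (x₀, x₀))
    (hint : ∀ᶠ x in 𝓝[≥] x₀, IntervalIntegrable (J x) volume x₀ x) :
    HasDerivWithinAt (fun x => ∫ y in x₀..x, J x y) (J x₀ x₀) (Ici x₀) x₀ := by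
  rw [hasDerivWithinAt_iff_isLittleO, Asymptotics.isLittleO_iff]
  intro ε hε
  obtain ⟨r, hr, hJr⟩ := Metric.continuousWithinAt_iff.mp hJ ε hε
  filter_upwards [hint, Ico_mem_nhdsGE (lt_add_of_pos_right x₀ hr)] with x hint hx
  calc ‖(∫ y in x₀..x, J x y) - (∫ y in x₀..x₀, J x₀ y) - (x - x₀) • J x₀ x₀‖
      = ‖∫ y in x₀..x, (J x y - J x₀ x₀)‖ := by
        rw [intervalIntegral.integral_sub hint intervalIntegrable_const,
          intervalIntegral.integral_same, intervalIntegral.integral_const, sub_zero]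
    _ ≤ ε * |x - x₀| := by
        refine norm_integral_le_of_norm_le_const fun y hy => ?_
        rw [uIoc_of_le hx.1] at hy
        rw [← dist_eq_norm]
        refine (hJr (x := (x, y)) ⟨hy.1.le, hy.2⟩ ?_).le
        rw [Prod.dist_eq, Real.dist_eq, Real.dist_eq, abs_of_nonneg (sub_nonneg.2 hx.1),
          abs_of_nonneg (sub_nonneg.2 hy.1.le)]
        exact max_lt (by linarith [hx.2]) (by linarith [hx.2, hy.2])
    _ = ε * ‖x - x₀‖ := by rw [Real.norm_eq_abs]

lemma eqOn_zero_of_abs_deriv_le {E E' : ℝ → ℝ} {δ C : ℝ} (hc : ContinuousOn E (Icc 0 δ))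
    (h0 : E 0 = 0) (hE : ∀ x ∈ Ioo 0 δ, HasDerivWithinAt E (E' x) (Ici x) x)
    (hbound : ∀ x ∈ Ioo 0 δ, |E' x| ≤ C * |E x|) : EqOn E 0 (Icc 0 δ) := by
  intro x hx
  rcases hx.1.eq_or_lt with rfl | hx0
  · exact h0
  have hgronwall : ∀ σ ∈ Ioc 0 x, |E x| ≤ |E σ| * Real.exp (C * (x - σ)) := by
    intro σ hσ
    have hσx : ∀ t ∈ Ico σ x, t ∈ Ioo 0 δ := fun t ht => ⟨hσ.1.trans_le ht.1, ht.2.trans_le hx.2⟩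
    have := norm_le_gronwallBound_of_norm_deriv_right_le (K := C) (ε := 0)
      (hc.mono (Icc_subset_Icc hσ.1.le hx.2)) (fun t ht => hE t (hσx t ht)) le_rfl
      (fun t ht => by simpa using hbound t (hσx t ht)) x ⟨hσ.2, le_rfl⟩
    simpa [gronwallBound_ε0] using this
  have hE0 : Tendsto E (𝓝[>] 0) (𝓝 0) := by
    have := (hc 0 ⟨le_rfl, hx0.le.trans hx.2⟩).tendsto.mono_left
      (nhdsWithin_le_of_mem (Icc_mem_nhdsGT (hx0.trans_le hx.2)))
    rwa [h0] at this
  have hlim : Tendsto (fun σ => |E σ| * Real.exp (C * (x - σ))) (𝓝[>] 0) (𝓝 0) := by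
    simpa using hE0.abs.mul ((Real.continuous_exp.comp (by fun_prop)).tendsto 0
      |>.mono_left nhdsWithin_le_nhds)
  refine abs_eq_zero.1 (le_antisymm (ge_of_tendsto hlim ?_) (abs_nonneg _))
  filter_upwards [Ioc_mem_nhdsGT hx0] with σ hσ using hgronwall σ hσ

def triangle (δ : ℝ) : Set (ℝ × ℝ) := {z | 0 ≤ z.2 ∧ z.2 ≤ z.1 ∧ z.1 ≤ δ}

def openTriangle (δ : ℝ) : Set (ℝ × ℝ) := {z | 0 < z.2 ∧ z.2 < z.1 ∧ z.1 < δ}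

variable {δ : ℝ}

lemma openTriangle_subset_triangle : openTriangle δ ⊆ triangle δ :=
  fun _ hz => ⟨hz.1.le, hz.2.1.le, hz.2.2.le⟩

lemma isOpen_openTriangle : IsOpen (openTriangle δ) :=
  (isOpen_lt continuous_const continuous_snd).inter
    ((isOpen_lt continuous_snd continuous_fst).inter (isOpen_lt continuous_fst continuous_const))

lemma isCompact_triangle : IsCompact (triangle δ) := by
  refine (isCompact_Icc (a := ((0 : ℝ), (0 : ℝ))) (b := (δ, δ))).of_isClosed_subset ?_ ?_
  · exact (isClosed_le continuous_const continuous_snd).inter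
      ((isClosed_le continuous_snd continuous_fst).inter
        (isClosed_le continuous_fst continuous_const))
  · rintro z ⟨h0, hyx, hx⟩
    exact ⟨⟨h0.trans hyx, h0⟩, hx, hyx.trans hx⟩

lemma convex_triangle : Convex ℝ (triangle δ) := by
  rintro ⟨x, y⟩ ⟨h0, hyx, hx⟩ ⟨x', y'⟩ ⟨h0', hyx', hx'⟩ s t hs ht hst
  simp only [triangle, mem_ofPred_eq, Prod.smul_mk, Prod.mk_add_mk, smul_eq_mul]
  exact ⟨by positivity, by nlinarith, by nlinarith⟩

lemma interior_triangle_nonempty (hδ : 0 < δ) : (interior (triangle δ)).Nonempty :=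
  ⟨(δ / 2, δ / 4), interior_maximal openTriangle_subset_triangle isOpen_openTriangle
    ⟨by positivity, by linarith, by linarith⟩⟩

lemma triangle_subset_closure_interior (hδ : 0 < δ) :
    triangle δ ⊆ closure (interior (triangle δ)) := by
  rw [convex_triangle.closure_interior_eq_closure_of_nonempty_interior
    (interior_triangle_nonempty hδ)]
  exact subset_closure

lemma uniqueDiffOn_triangle (hδ : 0 < δ) : UniqueDiffOn ℝ (triangle δ) :=
  uniqueDiffOn_convex convex_triangle (interior_triangle_nonempty hδ)

lemma mapsTo_fst_triangle : MapsTo (fun z : ℝ × ℝ => z.1) (triangle δ) (Icc 0 δ) :=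
  fun _ hz => ⟨hz.1.trans hz.2.1, hz.2.2⟩

lemma mapsTo_snd_triangle : MapsTo (fun z : ℝ × ℝ => z.2) (triangle δ) (Icc 0 δ) :=
  fun _ hz => ⟨hz.1, hz.2.1.trans hz.2.2⟩

lemma continuousOn_slice_triangle {J : ℝ → ℝ → ℝ}
    (hJ : ContinuousOn (fun z : ℝ × ℝ => J z.1 z.2) (triangle δ)) {x : ℝ} (hx : x ≤ δ) :
    ContinuousOn (J x) (Icc 0 x) :=
  hJ.comp (continuous_const.prodMk continuous_id).continuousOn fun _ hy => ⟨hy.1, hy.2, hx⟩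

lemma continuousOn_integral_triangle {J : ℝ → ℝ → ℝ} (hδ : 0 ≤ δ)
    (hJ : ContinuousOn (fun z : ℝ × ℝ => J z.1 z.2) (triangle δ)) :
    ContinuousOn (fun x => ∫ y in 0..x, J x y) (Icc 0 δ) := by
  -- extend `J` continuously to the plane through a retraction onto the triangle
  set ρ : ℝ × ℝ → ℝ × ℝ := fun z => (max 0 (min z.1 δ), max 0 (min z.2 (max 0 (min z.1 δ))))
  have hρT : ∀ z, ρ z ∈ triangle δ := fun z =>
    ⟨le_max_left _ _, max_le (le_max_left _ _) (min_le_right _ _), max_le hδ (min_le_right _ _)⟩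
  have hF : Continuous fun z : ℝ × ℝ => J (ρ z).1 (ρ z).2 :=
    hJ.comp_continuous (by fun_prop) hρT
  refine (continuous_parametric_intervalIntegral_of_continuous (a₀ := 0)
    (f := fun x y => J (ρ (x, y)).1 (ρ (x, y)).2) hF continuous_id)
    |>.continuousOn.congr fun x hx => integral_congr fun y hy => ?_
  rw [uIcc_of_le hx.1] at hy
  simp [ρ, hx.1, hx.2, hy.1, hy.2]

lemma hasDerivWithinAt_integral_triangle {J Jx : ℝ → ℝ → ℝ} {x₀ : ℝ}
    (hJ : ContinuousOn (fun z : ℝ × ℝ => J z.1 z.2) (triangle δ))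
    (hJx : ContinuousOn (fun z : ℝ × ℝ => Jx z.1 z.2) (triangle δ))
    (hderiv : ∀ x y, (x, y) ∈ triangle δ → HasDerivWithinAt (J · y) (Jx x y) (Icc y δ) x)
    (hx₀ : x₀ ∈ Ico 0 δ) :
    HasDerivWithinAt (fun x => ∫ y in 0..x, J x y) (J x₀ x₀ + ∫ y in 0..x₀, Jx x₀ y)
      (Ici x₀) x₀ := by
  have hrect : Icc x₀ δ ×ˢ Icc 0 x₀ ⊆ triangle δ :=
    fun z hz => ⟨hz.2.1, hz.2.2.trans hz.1.1, hz.1.2⟩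
  have hint : ∀ x ∈ Icc x₀ δ, ∀ a ∈ Icc 0 x, IntervalIntegrable (J x) volume a x₀ :=
    fun x hx a ha => ((continuousOn_slice_triangle hJ hx.2).mono
      (uIcc_subset_Icc ha ⟨hx₀.1, hx.1⟩)).intervalIntegrable
  have hbelow := hasDerivWithinAt_integral_of_continuousOn_deriv hx₀.1
    (fun x hx y hy => (hderiv x y (hrect ⟨hx, hy⟩)).mono (Icc_subset_Icc hy.2 le_rfl))
    (hJx.mono hrect) (fun x hx => hint x hx 0 ⟨le_rfl, hx₀.1.trans hx.1⟩)
  have habove := hasDerivWithinAt_integral_of_continuousWithinAt_diag (J := J) (x₀ := x₀)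
    ((hJ _ ⟨hx₀.1, le_rfl, hx₀.2.le⟩).mono_of_mem_nhdsWithin (mem_nhdsWithin.mpr
      ⟨{z | z.1 < δ}, isOpen_lt continuous_fst continuous_const, hx₀.2,
        fun z hz => ⟨hx₀.1.trans hz.2.1, hz.2.2, hz.1.le⟩⟩))
    (by filter_upwards [Icc_mem_nhdsGE hx₀.2] with x hx
          using (hint x hx x ⟨hx₀.1.trans hx.1, le_rfl⟩).symm)
  refine (habove.add (hbelow.mono_of_mem_nhdsWithin (Icc_mem_nhdsGE hx₀.2)))
    |>.congr_of_eventuallyEq ?_ (by simp)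
  filter_upwards [Icc_mem_nhdsGE hx₀.2] with x hx
  rw [add_comm]
  exact (integral_add_adjacent_intervals (hint x hx 0 ⟨le_rfl, hx₀.1.trans hx.1⟩)
    (hint x hx x ⟨hx₀.1.trans hx.1, le_rfl⟩).symm).symm

def energyDensity (a : ℝ → ℝ) (v v₁ v₂ : ℝ → ℝ → ℝ) (x y : ℝ) : ℝ :=
  a x * v₁ x y ^ 2 + a y * v₂ x y ^ 2 + v x y ^ 2

/-- The integrand of `E'(x)` once `2 a(y) ∂ᵧv ∂ₓ∂ᵧv` is integrated by parts and the equation is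
used to eliminate `∂ₓ²v`. -/
def energyFlux (a' b : ℝ → ℝ) (c v v₁ v₂ : ℝ → ℝ → ℝ) (x y : ℝ) : ℝ :=
  a' x * v₁ x y ^ 2 + 2 * (b y - a' y) * v₁ x y * v₂ x y + 2 * (c x y + 1) * v x y * v₁ x y

lemma sq_le_energyDensity {a : ℝ → ℝ} {v v₁ v₂ : ℝ → ℝ → ℝ} {x y : ℝ} (hx : 0 ≤ a x)
    (hy : 0 ≤ a y) : v x y ^ 2 ≤ energyDensity a v v₁ v₂ x y := by
  unfold energyDensity
  nlinarith [mul_nonneg hx (sq_nonneg (v₁ x y)), mul_nonneg hy (sq_nonneg (v₂ x y))]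

lemma abs_mul_mul_le {β p q M : ℝ} (hβ : |β| ≤ M) : |β * p * q| ≤ M * (p ^ 2 + q ^ 2) := by
  have hpq : |p| * |q| ≤ p ^ 2 + q ^ 2 := by
    nlinarith [sq_abs p, sq_abs q, sq_nonneg (|p| - |q|)]
  rw [abs_mul, abs_mul, mul_assoc]
  exact mul_le_mul hβ hpq (by positivity) ((abs_nonneg _).trans hβ)

lemma mul_le_energyDensity {a : ℝ → ℝ} {v v₁ v₂ : ℝ → ℝ → ℝ} {x y m : ℝ} (hx : m ≤ a x)
    (hy : m ≤ a y) (hm : m ≤ 1) :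
    m * (v₁ x y ^ 2 + v₂ x y ^ 2 + v x y ^ 2) ≤ energyDensity a v v₁ v₂ x y := by
  unfold energyDensity
  nlinarith [mul_le_mul_of_nonneg_right hx (sq_nonneg (v₁ x y)),
    mul_le_mul_of_nonneg_right hy (sq_nonneg (v₂ x y)),
    mul_le_mul_of_nonneg_right hm (sq_nonneg (v x y))]

lemma abs_energyFlux_le {a' b : ℝ → ℝ} {c v v₁ v₂ : ℝ → ℝ → ℝ} {x y M : ℝ}
    (hM : |a' x| + |2 * (b y - a' y)| + |2 * (c x y + 1)| ≤ M) :
    |energyFlux a' b c v v₁ v₂ x y| ≤ 4 * M * (v₁ x y ^ 2 + v₂ x y ^ 2 + v x y ^ 2) := by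
  have hα := abs_nonneg (a' x)
  have hβ := abs_nonneg (2 * (b y - a' y))
  have hγ := abs_nonneg (2 * (c x y + 1))
  have e₁ := abs_mul_mul_le (M := M) (p := v₁ x y) (q := v₁ x y) (β := a' x) (by linarith)
  have e₂ := abs_mul_mul_le (M := M) (p := v₁ x y) (q := v₂ x y) (β := 2 * (b y - a' y)) (by linarith)
  have e₃ := abs_mul_mul_le (M := M) (p := v x y) (q := v₁ x y) (β := 2 * (c x y + 1)) (by linarith)
  have hM0 : 0 ≤ M := by linarith
  unfold energyFlux
  rw [sq (v₁ x y), ← mul_assoc]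
  nlinarith [abs_add_le (a' x * v₁ x y * v₁ x y + 2 * (b y - a' y) * v₁ x y * v₂ x y)
    (2 * (c x y + 1) * v x y * v₁ x y), abs_add_le (a' x * v₁ x y * v₁ x y)
    (2 * (b y - a' y) * v₁ x y * v₂ x y), mul_nonneg hM0 (sq_nonneg (v₂ x y)),
    mul_nonneg hM0 (sq_nonneg (v x y)), mul_nonneg hM0 (sq_nonneg (v₁ x y))]

lemma exists_abs_energyFlux_le {v v₁ v₂ : ℝ → ℝ → ℝ} {a a' b : ℝ → ℝ} {c : ℝ → ℝ → ℝ}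
    (hδ : 0 ≤ δ) (ha : ContinuousOn a (Icc 0 δ)) (hapos : ∀ t ∈ Icc 0 δ, 0 < a t)
    (ha' : ContinuousOn a' (Icc 0 δ)) (hb : ContinuousOn b (Icc 0 δ))
    (hc : ContinuousOn (fun z : ℝ × ℝ => c z.1 z.2) (triangle δ)) :
    ∃ C, ∀ x y, (x, y) ∈ triangle δ →
      |energyFlux a' b c v v₁ v₂ x y| ≤ C * energyDensity a v v₁ v₂ x y := by
  obtain ⟨t₀, ht₀, hmin⟩ := isCompact_Icc.exists_isMinOn ⟨0, le_rfl, hδ⟩ ha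
  have hm : 0 < min (a t₀) 1 := lt_min (hapos t₀ ht₀) one_pos
  have := mapsTo_fst_triangle (δ := δ)
  have := mapsTo_snd_triangle (δ := δ)
  obtain ⟨M, hM⟩ := isCompact_triangle.exists_bound_of_continuousOn
    (f := fun z : ℝ × ℝ => |a' z.1| + |2 * (b z.2 - a' z.2)| + |2 * (c z.1 z.2 + 1)|)
    (by fun_prop (disch := assumption))
  refine ⟨4 * M / min (a t₀) 1, fun x y h => ?_⟩
  have hMxy := (le_abs_self _).trans (hM (x, y) h)
  have hM0 : 0 ≤ M := (norm_nonneg _).trans (hM (x, y) h)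
  calc |energyFlux a' b c v v₁ v₂ x y| ≤ 4 * M * (v₁ x y ^ 2 + v₂ x y ^ 2 + v x y ^ 2) :=
        abs_energyFlux_le hMxy
    _ = 4 * M / min (a t₀) 1 * (min (a t₀) 1 * (v₁ x y ^ 2 + v₂ x y ^ 2 + v x y ^ 2)) := by
        field_simp
    _ ≤ 4 * M / min (a t₀) 1 * energyDensity a v v₁ v₂ x y :=
        mul_le_mul_of_nonneg_left (mul_le_energyDensity
          ((min_le_left _ _).trans (hmin (mapsTo_fst_triangle h)))
          ((min_le_left _ _).trans (hmin (mapsTo_snd_triangle h))) (min_le_right _ _))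
          (by positivity)

/-- `v₁, v₂` stand for `∂ₓv, ∂ᵧv` and `v₁₁, v₁₂, v₂₂` for `∂ₓ²v, ∂ₓ∂ᵧv, ∂ᵧ²v`, given as one-sided
derivatives along the horizontal, vertical and diagonal segments of the closed triangle. -/
structure IsTriangleJet (δ : ℝ) (v v₁ v₂ v₁₁ v₁₂ v₂₂ : ℝ → ℝ → ℝ) : Prop where
  continuousOn : ContinuousOn (fun z : ℝ × ℝ => v z.1 z.2) (triangle δ)
  continuousOn₁ : ContinuousOn (fun z : ℝ × ℝ => v₁ z.1 z.2) (triangle δ)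
  continuousOn₂ : ContinuousOn (fun z : ℝ × ℝ => v₂ z.1 z.2) (triangle δ)
  continuousOn₁₁ : ContinuousOn (fun z : ℝ × ℝ => v₁₁ z.1 z.2) (triangle δ)
  continuousOn₁₂ : ContinuousOn (fun z : ℝ × ℝ => v₁₂ z.1 z.2) (triangle δ)
  continuousOn₂₂ : ContinuousOn (fun z : ℝ × ℝ => v₂₂ z.1 z.2) (triangle δ)
  hasDerivWithinAt_fst : ∀ x y, (x, y) ∈ triangle δ →
    HasDerivWithinAt (v · y) (v₁ x y) (Icc y δ) x
  hasDerivWithinAt_fst₁ : ∀ x y, (x, y) ∈ triangle δ →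
    HasDerivWithinAt (v₁ · y) (v₁₁ x y) (Icc y δ) x
  hasDerivWithinAt_fst₂ : ∀ x y, (x, y) ∈ triangle δ →
    HasDerivWithinAt (v₂ · y) (v₁₂ x y) (Icc y δ) x
  hasDerivWithinAt_snd : ∀ x y, (x, y) ∈ triangle δ →
    HasDerivWithinAt (v x) (v₂ x y) (Icc 0 x) y
  hasDerivWithinAt_snd₁ : ∀ x y, (x, y) ∈ triangle δ →
    HasDerivWithinAt (v₁ x) (v₁₂ x y) (Icc 0 x) y
  hasDerivWithinAt_snd₂ : ∀ x y, (x, y) ∈ triangle δ →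
    HasDerivWithinAt (v₂ x) (v₂₂ x y) (Icc 0 x) y
  hasDerivWithinAt_diag : ∀ t ∈ Icc 0 δ,
    HasDerivWithinAt (fun s => v s s) (v₁ t t + v₂ t t) (Icc 0 δ) t

lemma exists_isTriangleJet_of_contDiffOn (hδ : 0 < δ) {f : ℝ → ℝ → ℝ}
    (hf : ContDiffOn ℝ 2 (fun z : ℝ × ℝ => f z.1 z.2) (triangle δ)) :
    ∃ f₁ f₂ f₁₁ f₁₂ f₂₂, IsTriangleJet δ f f₁ f₂ f₁₁ f₁₂ f₂₂ := by
  set T := triangle δ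
  have hT : UniqueDiffOn ℝ T := uniqueDiffOn_triangle hδ
  set D := fderivWithin ℝ (fun z : ℝ × ℝ => f z.1 z.2) T
  set D2 := fderivWithin ℝ D T
  have hD : ContDiffOn ℝ 1 D T := hf.fderivWithin hT (by norm_num)
  have hfD : ∀ z ∈ T, HasFDerivWithinAt (fun z : ℝ × ℝ => f z.1 z.2) (D z) T z :=
    fun z hz => (hf.differentiableOn (by norm_num) z hz).hasFDerivWithinAt
  have hDu : ∀ u, ∀ z ∈ T, HasFDerivWithinAt (fun z => D z u)
      ((ContinuousLinearMap.apply ℝ ℝ u).comp (D2 z)) T z := fun u z hz =>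
    (ContinuousLinearMap.apply ℝ ℝ u).hasFDerivAt.comp_hasFDerivWithinAt z
      (hD.differentiableOn one_ne_zero z hz).hasFDerivWithinAt
  have hD2 : ContinuousOn D2 T := hD.continuousOn_fderivWithin hT le_rfl
  have hsymm : ∀ z ∈ T, D2 z (0, 1) (1, 0) = D2 z (1, 0) (0, 1) := fun z hz =>
    (hf.contDiffWithinAt hz).isSymmSndFDerivWithinAt (by simp) hT
      (triangle_subset_closure_interior hδ hz) hz _ _
  have hline : ∀ {g : ℝ × ℝ → ℝ} {G : ℝ × ℝ →L[ℝ] ℝ} {γ : ℝ → ℝ × ℝ} {u : ℝ × ℝ} {S : Set ℝ}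
      {s : ℝ}, HasDerivAt γ u s → MapsTo γ S T → HasFDerivWithinAt g G T (γ s) →
      HasDerivWithinAt (g ∘ γ) (G u) S s :=
    fun hγ hS hg => hg.comp_hasDerivWithinAt _ hγ.hasDerivWithinAt hS
  have hx : ∀ y s, HasDerivAt (fun x : ℝ => (x, y)) ((1 : ℝ), (0 : ℝ)) s :=
    fun y s => (hasDerivAt_id s).prodMk (hasDerivAt_const s y)
  have hy : ∀ x s, HasDerivAt (fun y : ℝ => (x, y)) ((0 : ℝ), (1 : ℝ)) s :=
    fun x s => (hasDerivAt_const s x).prodMk (hasDerivAt_id s)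
  have hxT : ∀ x y, (x, y) ∈ T → MapsTo (fun s : ℝ => (s, y)) (Icc y δ) T :=
    fun x y h s hs => ⟨h.1, hs.1, hs.2⟩
  have hyT : ∀ x y, (x, y) ∈ T → MapsTo (fun s : ℝ => (x, s)) (Icc 0 x) T :=
    fun x y h s hs => ⟨hs.1, hs.2, h.2.2⟩
  refine ⟨fun x y => D (x, y) (1, 0), fun x y => D (x, y) (0, 1),
    fun x y => D2 (x, y) (1, 0) (1, 0), fun x y => D2 (x, y) (1, 0) (0, 1),
    fun x y => D2 (x, y) (0, 1) (0, 1), ⟨hf.continuousOn,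
    hD.continuousOn.clm_apply continuousOn_const, hD.continuousOn.clm_apply continuousOn_const,
    (hD2.clm_apply continuousOn_const).clm_apply continuousOn_const,
    (hD2.clm_apply continuousOn_const).clm_apply continuousOn_const,
    (hD2.clm_apply continuousOn_const).clm_apply continuousOn_const,
    fun x y h => hline (hx y x) (hxT x y h) (hfD _ h),
    fun x y h => hline (hx y x) (hxT x y h) (hDu _ _ h),
    fun x y h => hline (hx y x) (hxT x y h) (hDu _ _ h),
    fun x y h => hline (hy x y) (hyT x y h) (hfD _ h),
    fun x y h => hsymm _ h ▸ hline (hy x y) (hyT x y h) (hDu _ _ h),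
    fun x y h => hline (hy x y) (hyT x y h) (hDu _ _ h), fun t ht => ?_⟩⟩
  have hdiag := hline ((hasDerivAt_id t).prodMk (hasDerivAt_id t))
    (S := Icc 0 δ) (fun s hs => ⟨hs.1, le_rfl, hs.2⟩) (hfD (t, t) ⟨ht.1, le_rfl, ht.2⟩)
  rwa [show ((1 : ℝ), (1 : ℝ)) = (1, 0) + (0, 1) by simp, map_add] at hdiag

namespace IsTriangleJet

variable {v v₁ v₂ v₁₁ v₁₂ v₂₂ : ℝ → ℝ → ℝ} {a a' b : ℝ → ℝ} {c : ℝ → ℝ → ℝ}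

lemma mul_left {w w' w'' : ℝ → ℝ} (hv : IsTriangleJet δ v v₁ v₂ v₁₁ v₁₂ v₂₂)
    (hw : ∀ t ∈ Icc 0 δ, HasDerivWithinAt w (w' t) (Icc 0 δ) t)
    (hw' : ∀ t ∈ Icc 0 δ, HasDerivWithinAt w' (w'' t) (Icc 0 δ) t)
    (hw'' : ContinuousOn w'' (Icc 0 δ)) :
    IsTriangleJet δ (fun x y => w y * v x y) (fun x y => w y * v₁ x y)
      (fun x y => w' y * v x y + w y * v₂ x y) (fun x y => w y * v₁₁ x y)
      (fun x y => w' y * v₁ x y + w y * v₁₂ x y)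
      (fun x y => w'' y * v x y + 2 * (w' y * v₂ x y) + w y * v₂₂ x y) := by
  have := mapsTo_snd_triangle (δ := δ)
  have hwc : ContinuousOn w (Icc 0 δ) := fun t ht => (hw t ht).continuousWithinAt
  have hw'c : ContinuousOn w' (Icc 0 δ) := fun t ht => (hw' t ht).continuousWithinAt
  have := hv.continuousOn
  have := hv.continuousOn₁
  have := hv.continuousOn₂
  have := hv.continuousOn₁₁
  have := hv.continuousOn₁₂
  have := hv.continuousOn₂₂
  have hwy : ∀ x y, (x, y) ∈ triangle δ → HasDerivWithinAt w (w' y) (Icc 0 x) y :=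
    fun x y h => (hw y (mapsTo_snd_triangle h)).mono (Icc_subset_Icc le_rfl h.2.2)
  have hw'y : ∀ x y, (x, y) ∈ triangle δ → HasDerivWithinAt w' (w'' y) (Icc 0 x) y :=
    fun x y h => (hw' y (mapsTo_snd_triangle h)).mono (Icc_subset_Icc le_rfl h.2.2)
  refine ⟨by fun_prop (disch := assumption), by fun_prop (disch := assumption),
    by fun_prop (disch := assumption), by fun_prop (disch := assumption),
    by fun_prop (disch := assumption), by fun_prop (disch := assumption),
    fun x y h => (hv.hasDerivWithinAt_fst x y h).const_mul _,
    fun x y h => (hv.hasDerivWithinAt_fst₁ x y h).const_mul _,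
    fun x y h => ((hv.hasDerivWithinAt_fst x y h).const_mul _).add
      ((hv.hasDerivWithinAt_fst₂ x y h).const_mul _),
    fun x y h => ((hwy x y h).fun_mul (hv.hasDerivWithinAt_snd x y h)).congr_deriv (by ring),
    fun x y h => ((hwy x y h).fun_mul (hv.hasDerivWithinAt_snd₁ x y h)).congr_deriv (by ring),
    fun x y h => (((hw'y x y h).fun_mul (hv.hasDerivWithinAt_snd x y h)).fun_add
      ((hwy x y h).fun_mul (hv.hasDerivWithinAt_snd₂ x y h))).congr_deriv (by ring),
    fun t ht => ((hw t ht).fun_mul (hv.hasDerivWithinAt_diag t ht)).congr_deriv (by ring)⟩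

lemma deriv_deriv_fst (hv : IsTriangleJet δ v v₁ v₂ v₁₁ v₁₂ v₂₂) {x y : ℝ}
    (h : (x, y) ∈ openTriangle δ) : deriv (fun s => deriv (v · y) s) x = v₁₁ x y := by
  have hev : (fun s => deriv (v · y) s) =ᶠ[𝓝 x] (v₁ · y) := by
    filter_upwards [Ioo_mem_nhds h.2.1 h.2.2] with s hs
    exact ((hv.hasDerivWithinAt_fst s y ⟨h.1.le, hs.1.le, hs.2.le⟩).hasDerivAt
      (Icc_mem_nhds hs.1 hs.2)).deriv
  rw [hev.deriv_eq]
  exact ((hv.hasDerivWithinAt_fst₁ x y (openTriangle_subset_triangle h)).hasDerivAt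
    (Icc_mem_nhds h.2.1 h.2.2)).deriv

lemma deriv_snd (hv : IsTriangleJet δ v v₁ v₂ v₁₁ v₁₂ v₂₂) {x y : ℝ}
    (h : (x, y) ∈ openTriangle δ) : deriv (v x) y = v₂ x y :=
  ((hv.hasDerivWithinAt_snd x y (openTriangle_subset_triangle h)).hasDerivAt
    (Icc_mem_nhds h.1 h.2.1)).deriv

lemma deriv_deriv_snd (hv : IsTriangleJet δ v v₁ v₂ v₁₁ v₁₂ v₂₂) {x y : ℝ}
    (h : (x, y) ∈ openTriangle δ) : deriv (fun t => deriv (v x) t) y = v₂₂ x y := by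
  have hev : (fun t => deriv (v x) t) =ᶠ[𝓝 y] v₂ x := by
    filter_upwards [Ioo_mem_nhds h.1 h.2.1] with t ht
    exact hv.deriv_snd ⟨ht.1, ht.2, h.2.2⟩
  rw [hev.deriv_eq]
  exact ((hv.hasDerivWithinAt_snd₂ x y (openTriangle_subset_triangle h)).hasDerivAt
    (Icc_mem_nhds h.1 h.2.1)).deriv

lemma derivWithin_snd_zero (hv : IsTriangleJet δ v v₁ v₂ v₁₁ v₁₂ v₂₂) {x : ℝ}
    (hx : x ∈ Ioc 0 δ) : derivWithin (v x) (Icc 0 x) 0 = v₂ x 0 :=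
  (hv.hasDerivWithinAt_snd x 0 ⟨le_rfl, hx.1.le, hx.2⟩).derivWithin
    (uniqueDiffOn_Icc hx.1 0 ⟨le_rfl, hx.1.le⟩)

lemma add_eq_zero_of_diag (hv : IsTriangleJet δ v v₁ v₂ v₁₁ v₁₂ v₂₂) (hδ : 0 < δ)
    (hdiag : ∀ t ∈ Icc 0 δ, v t t = 0) {t : ℝ} (ht : t ∈ Icc 0 δ) : v₁ t t + v₂ t t = 0 :=
  (uniqueDiffOn_Icc hδ t ht).eq_deriv _ (hv.hasDerivWithinAt_diag t ht)
    ((hasDerivWithinAt_const t _ 0).congr (fun s hs => hdiag s hs) (hdiag t ht))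

lemma continuousOn_energyDensity (hv : IsTriangleJet δ v v₁ v₂ v₁₁ v₁₂ v₂₂)
    (ha : ContinuousOn a (Icc 0 δ)) :
    ContinuousOn (fun z : ℝ × ℝ => energyDensity a v v₁ v₂ z.1 z.2) (triangle δ) := by
  have := mapsTo_fst_triangle (δ := δ)
  have := mapsTo_snd_triangle (δ := δ)
  have := hv.continuousOn
  have := hv.continuousOn₁
  have := hv.continuousOn₂
  unfold energyDensity
  fun_prop (disch := assumption)

lemma continuousOn_energyFlux (hv : IsTriangleJet δ v v₁ v₂ v₁₁ v₁₂ v₂₂)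
    (ha' : ContinuousOn a' (Icc 0 δ)) (hb : ContinuousOn b (Icc 0 δ))
    (hc : ContinuousOn (fun z : ℝ × ℝ => c z.1 z.2) (triangle δ)) :
    ContinuousOn (fun z : ℝ × ℝ => energyFlux a' b c v v₁ v₂ z.1 z.2) (triangle δ) := by
  have := mapsTo_fst_triangle (δ := δ)
  have := mapsTo_snd_triangle (δ := δ)
  have := hv.continuousOn
  have := hv.continuousOn₁
  have := hv.continuousOn₂
  unfold energyFlux
  fun_prop (disch := assumption)

lemma hasDerivWithinAt_integral_energyDensity (hv : IsTriangleJet δ v v₁ v₂ v₁₁ v₁₂ v₂₂)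
    (ha : ∀ t ∈ Icc 0 δ, HasDerivWithinAt a (a' t) (Icc 0 δ) t) (ha' : ContinuousOn a' (Icc 0 δ))
    {x₀ : ℝ} (hx₀ : x₀ ∈ Ico 0 δ) :
    HasDerivWithinAt (fun x => ∫ y in 0..x, energyDensity a v v₁ v₂ x y)
      (energyDensity a v v₁ v₂ x₀ x₀ + ∫ y in 0..x₀, (a' x₀ * v₁ x₀ y ^ 2
        + 2 * a x₀ * v₁ x₀ y * v₁₁ x₀ y + 2 * a y * v₂ x₀ y * v₁₂ x₀ y + 2 * v x₀ y * v₁ x₀ y))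
      (Ici x₀) x₀ := by
  have hac : ContinuousOn a (Icc 0 δ) := fun t ht => (ha t ht).continuousWithinAt
  refine hasDerivWithinAt_integral_triangle (Jx := fun x y => a' x * v₁ x y ^ 2
    + 2 * a x * v₁ x y * v₁₁ x y + 2 * a y * v₂ x y * v₁₂ x y + 2 * v x y * v₁ x y)
    (hv.continuousOn_energyDensity hac) ?_ (fun x y h => ?_) hx₀
  · have := mapsTo_fst_triangle (δ := δ)
    have := mapsTo_snd_triangle (δ := δ)
    have := hv.continuousOn
    have := hv.continuousOn₁
    have := hv.continuousOn₂
    have := hv.continuousOn₁₁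
    have := hv.continuousOn₁₂
    fun_prop (disch := assumption)
  · have hax := (ha x (mapsTo_fst_triangle h)).mono (Icc_subset_Icc h.1 le_rfl)
    exact (((hax.fun_mul ((hv.hasDerivWithinAt_fst₁ x y h).fun_pow 2)).fun_add
      (((hv.hasDerivWithinAt_fst₂ x y h).fun_pow 2).const_mul (a y))).fun_add
      ((hv.hasDerivWithinAt_fst x y h).fun_pow 2)).congr_deriv (by ring)

lemma integral_deriv_boundaryTerm (hv : IsTriangleJet δ v v₁ v₂ v₁₁ v₁₂ v₂₂) (hδ : 0 < δ)
    (ha : ∀ t ∈ Icc 0 δ, HasDerivWithinAt a (a' t) (Icc 0 δ) t) (ha' : ContinuousOn a' (Icc 0 δ))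
    (hbc : ∀ x ∈ Ioo 0 δ, v₂ x 0 = 0) (hdiag : ∀ t ∈ Icc 0 δ, v t t = 0) {x : ℝ}
    (hx : x ∈ Ioo 0 δ) :
    ∫ t in 0..x, (2 * a' t * v₁ x t * v₂ x t + 2 * a t * v₁₂ x t * v₂ x t
      + 2 * a t * v₁ x t * v₂₂ x t) = -energyDensity a v v₁ v₂ x x := by
  have hsub : Icc 0 x ⊆ Icc 0 δ := Icc_subset_Icc le_rfl hx.2.le
  have hT : ∀ t ∈ Icc 0 x, (x, t) ∈ triangle δ := fun t ht => ⟨ht.1, ht.2, hx.2.le⟩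
  have hderiv : ∀ t ∈ Icc 0 x, HasDerivWithinAt (fun t => 2 * a t * v₁ x t * v₂ x t)
      (2 * a' t * v₁ x t * v₂ x t + 2 * a t * v₁₂ x t * v₂ x t + 2 * a t * v₁ x t * v₂₂ x t)
      (Icc 0 x) t := fun t ht =>
    ((((ha t (hsub ht)).mono hsub).const_mul 2).fun_mul (hv.hasDerivWithinAt_snd₁ x t (hT t ht))
      |>.fun_mul (hv.hasDerivWithinAt_snd₂ x t (hT t ht))).congr_deriv (by ring)
  have hcont : ContinuousOn (fun t => 2 * a' t * v₁ x t * v₂ x t + 2 * a t * v₁₂ x t * v₂ x t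
      + 2 * a t * v₁ x t * v₂₂ x t) (Icc 0 x) := by
    have : ContinuousOn a (Icc 0 x) := fun t ht => ((ha t (hsub ht)).mono hsub).continuousWithinAt
    have := ha'.mono hsub
    have := continuousOn_slice_triangle hv.continuousOn₁ hx.2.le
    have := continuousOn_slice_triangle hv.continuousOn₂ hx.2.le
    have := continuousOn_slice_triangle hv.continuousOn₁₂ hx.2.le
    have := continuousOn_slice_triangle hv.continuousOn₂₂ hx.2.le
    fun_prop
  rw [integral_eq_sub_of_hasDerivAt_of_le hx.1.le (fun t ht => (hderiv t ht).continuousWithinAt)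
      (fun t ht => (hderiv t (Ioo_subset_Icc_self ht)).hasDerivAt (Icc_mem_nhds ht.1 ht.2))
      (hcont.intervalIntegrable_of_Icc hx.1.le),
    hbc x hx]
  simp only [energyDensity, hdiag x ⟨hx.1.le, hx.2.le⟩,
    eq_neg_of_add_eq_zero_right (hv.add_eq_zero_of_diag hδ hdiag ⟨hx.1.le, hx.2.le⟩)]
  ring

lemma energy_identity (hv : IsTriangleJet δ v v₁ v₂ v₁₁ v₁₂ v₂₂) (hδ : 0 < δ)
    (ha : ∀ t ∈ Icc 0 δ, HasDerivWithinAt a (a' t) (Icc 0 δ) t) (ha' : ContinuousOn a' (Icc 0 δ))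
    (hb : ContinuousOn b (Icc 0 δ)) (hc : ContinuousOn (fun z : ℝ × ℝ => c z.1 z.2) (triangle δ))
    (hpde : ∀ x y, (x, y) ∈ openTriangle δ →
      a x * v₁₁ x y = a y * v₂₂ x y + b y * v₂ x y + c x y * v x y)
    (hbc : ∀ x ∈ Ioo 0 δ, v₂ x 0 = 0) (hdiag : ∀ t ∈ Icc 0 δ, v t t = 0) {x : ℝ}
    (hx : x ∈ Ioo 0 δ) :
    energyDensity a v v₁ v₂ x x + ∫ y in 0..x, (a' x * v₁ x y ^ 2
        + 2 * a x * v₁ x y * v₁₁ x y + 2 * a y * v₂ x y * v₁₂ x y + 2 * v x y * v₁ x y)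
      = ∫ y in 0..x, energyFlux a' b c v v₁ v₂ x y := by
  set g' : ℝ → ℝ := fun t => 2 * a' t * v₁ x t * v₂ x t + 2 * a t * v₁₂ x t * v₂ x t
    + 2 * a t * v₁ x t * v₂₂ x t
  have hsub : Icc 0 x ⊆ Icc 0 δ := Icc_subset_Icc le_rfl hx.2.le
  have hg' : IntervalIntegrable g' volume 0 x := by
    have : ContinuousOn a (Icc 0 x) := fun t ht => ((ha t (hsub ht)).mono hsub).continuousWithinAt
    have := ha'.mono hsub
    have := continuousOn_slice_triangle hv.continuousOn₁ hx.2.le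
    have := continuousOn_slice_triangle hv.continuousOn₂ hx.2.le
    have := continuousOn_slice_triangle hv.continuousOn₁₂ hx.2.le
    have := continuousOn_slice_triangle hv.continuousOn₂₂ hx.2.le
    exact ContinuousOn.intervalIntegrable_of_Icc hx.1.le (by fun_prop)
  have hflux : IntervalIntegrable (energyFlux a' b c v v₁ v₂ x) volume 0 x :=
    (continuousOn_slice_triangle (hv.continuousOn_energyFlux ha' hb hc) hx.2.le)
      |>.intervalIntegrable_of_Icc hx.1.le
  have hpde' : EqOn (fun y => a' x * v₁ x y ^ 2 + 2 * a x * v₁ x y * v₁₁ x y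
      + 2 * a y * v₂ x y * v₁₂ x y + 2 * v x y * v₁ x y)
      (fun y => energyFlux a' b c v v₁ v₂ x y + g' y) (Ioo 0 x) := fun y hy => by
    simp only [energyFlux, g']
    linear_combination (2 * v₁ x y) * hpde x y ⟨hy.1, hy.2, hx.2⟩
  rw [integral_congr_Ioo_of_le hx.1.le hpde', intervalIntegral.integral_add hflux hg',
    hv.integral_deriv_boundaryTerm hδ ha ha' hbc hdiag hx]
  ring

lemma integral_energyDensity_eq_zero (hv : IsTriangleJet δ v v₁ v₂ v₁₁ v₁₂ v₂₂) (hδ : 0 < δ)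
    (ha : ∀ t ∈ Icc 0 δ, HasDerivWithinAt a (a' t) (Icc 0 δ) t) (ha' : ContinuousOn a' (Icc 0 δ))
    (hapos : ∀ t ∈ Icc 0 δ, 0 < a t)
    (hb : ContinuousOn b (Icc 0 δ)) (hc : ContinuousOn (fun z : ℝ × ℝ => c z.1 z.2) (triangle δ))
    (hpde : ∀ x y, (x, y) ∈ openTriangle δ →
      a x * v₁₁ x y = a y * v₂₂ x y + b y * v₂ x y + c x y * v x y)
    (hbc : ∀ x ∈ Ioo 0 δ, v₂ x 0 = 0) (hdiag : ∀ t ∈ Icc 0 δ, v t t = 0) :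
    EqOn (fun x => ∫ y in 0..x, energyDensity a v v₁ v₂ x y) 0 (Icc 0 δ) := by
  have hac : ContinuousOn a (Icc 0 δ) := fun t ht => (ha t ht).continuousWithinAt
  obtain ⟨C, hC⟩ := exists_abs_energyFlux_le hδ.le hac hapos ha' hb hc
  refine eqOn_zero_of_abs_deriv_le (C := C) (continuousOn_integral_triangle hδ.le
    (hv.continuousOn_energyDensity hac)) (by simp) (fun x hx =>
    (hv.hasDerivWithinAt_integral_energyDensity ha ha' ⟨hx.1.le, hx.2⟩).congr_deriv
      (hv.energy_identity hδ ha ha' hb hc hpde hbc hdiag hx)) (fun x hx => ?_)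
  have hflux := continuousOn_slice_triangle (hv.continuousOn_energyFlux ha' hb hc) hx.2.le
  have hdensity := continuousOn_slice_triangle (hv.continuousOn_energyDensity hac) hx.2.le
  calc |∫ y in 0..x, energyFlux a' b c v v₁ v₂ x y|
      ≤ ∫ y in 0..x, |energyFlux a' b c v v₁ v₂ x y| := abs_integral_le_integral_abs hx.1.le
    _ ≤ ∫ y in 0..x, C * energyDensity a v v₁ v₂ x y :=
      integral_mono_on hx.1.le (hflux.intervalIntegrable_of_Icc hx.1.le).abs
        ((hdensity.intervalIntegrable_of_Icc hx.1.le).const_mul C)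
        fun y hy => hC x y ⟨hy.1, hy.2, hx.2.le⟩
    _ ≤ C * |∫ y in 0..x, energyDensity a v v₁ v₂ x y| := by
      rw [intervalIntegral.integral_const_mul, abs_of_nonneg (integral_nonneg hx.1.le
        fun y hy => (sq_nonneg _).trans (sq_le_energyDensity (hapos x ⟨hx.1.le, hx.2.le⟩).le
          (hapos y ⟨hy.1, hy.2.trans hx.2.le⟩).le))]

theorem eq_zero_of_goursat_neumann (hv : IsTriangleJet δ v v₁ v₂ v₁₁ v₁₂ v₂₂) (hδ : 0 < δ)
    (ha : ∀ t ∈ Icc 0 δ, HasDerivWithinAt a (a' t) (Icc 0 δ) t) (ha' : ContinuousOn a' (Icc 0 δ))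
    (hapos : ∀ t ∈ Icc 0 δ, 0 < a t)
    (hb : ContinuousOn b (Icc 0 δ)) (hc : ContinuousOn (fun z : ℝ × ℝ => c z.1 z.2) (triangle δ))
    (hpde : ∀ x y, (x, y) ∈ openTriangle δ →
      a x * v₁₁ x y = a y * v₂₂ x y + b y * v₂ x y + c x y * v x y)
    (hbc : ∀ x ∈ Ioo 0 δ, v₂ x 0 = 0) (hdiag : ∀ t ∈ Icc 0 δ, v t t = 0) :
    ∀ x y, (x, y) ∈ triangle δ → v x y = 0 := by
  rintro x y hxy
  have hx : x ∈ Icc 0 δ := mapsTo_fst_triangle hxy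
  rcases hx.1.eq_or_lt with rfl | hx0
  · obtain rfl : y = 0 := le_antisymm hxy.2.1 hxy.1
    exact hdiag 0 hx
  have hay : 0 ≤ a y := (hapos y (mapsTo_snd_triangle hxy)).le
  by_contra hne
  have hpos : 0 < ∫ y in 0..x, energyDensity a v v₁ v₂ x y :=
    integral_pos hx0 (continuousOn_slice_triangle
      (hv.continuousOn_energyDensity fun t ht => (ha t ht).continuousWithinAt) hx.2)
      (fun y' hy' => (sq_nonneg _).trans (sq_le_energyDensity (hapos x hx).le
        (hapos y' ⟨hy'.1.le, hy'.2.trans hx.2⟩).le))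
      ⟨y, ⟨hxy.1, hxy.2.1⟩, (pow_two_pos_of_ne_zero hne).trans_le
        (sq_le_energyDensity (hapos x hx).le hay)⟩
  exact hpos.ne' (hv.integral_energyDensity_eq_zero hδ ha ha' hapos hb hc hpde hbc hdiag hx)

lemma pde_of_deriv_slices {K f₁ f₂ f₁₁ f₁₂ f₂₂ : ℝ → ℝ → ℝ} {p q a₁ a₂ : ℝ → ℝ}
    (hK : IsTriangleJet δ K f₁ f₂ f₁₁ f₁₂ f₂₂)
    (ha : ∀ t ∈ Icc 0 δ, HasDerivWithinAt a (a₁ t) (Icc 0 δ) t)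
    (ha₁ : ∀ t ∈ Icc 0 δ, HasDerivWithinAt a₁ (a₂ t) (Icc 0 δ) t) (ha₂ : ContinuousOn a₂ (Icc 0 δ))
    (hpde : ∀ x y : ℝ, 0 < y → y < x → x < δ →
      a x * deriv (fun s => deriv (fun s' => K s' y) s) x
        - deriv (fun s => deriv (fun s' => a s' * K x s') s) y = (q x - p y) * K x y)
    {x y : ℝ} (h : (x, y) ∈ openTriangle δ) :
    a x * f₁₁ x y = a₂ y * K x y + 2 * (a₁ y * f₂ x y) + a y * f₂₂ x y + (q x - p y) * K x y := by
  have := hpde x y h.1 h.2.1 h.2.2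
  rw [hK.deriv_deriv_fst h, (hK.mul_left ha ha₁ ha₂).deriv_deriv_snd h] at this
  linarith

theorem eq_zero_of_goursat_robin {K f₁ f₂ f₁₁ f₁₂ f₂₂ : ℝ → ℝ → ℝ} {p q a₁ a₂ : ℝ → ℝ}
    (hK : IsTriangleJet δ K f₁ f₂ f₁₁ f₁₂ f₂₂) (hδ : 0 < δ)
    (ha : ∀ t ∈ Icc 0 δ, HasDerivWithinAt a (a₁ t) (Icc 0 δ) t)
    (ha₁ : ∀ t ∈ Icc 0 δ, HasDerivWithinAt a₁ (a₂ t) (Icc 0 δ) t) (ha₂ : ContinuousOn a₂ (Icc 0 δ))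
    (hapos : ∀ t ∈ Icc 0 δ, 0 < a t) (hp : ContinuousOn p (Icc 0 δ))
    (hq : ContinuousOn q (Icc 0 δ))
    (hpde : ∀ x y, (x, y) ∈ openTriangle δ → a x * f₁₁ x y
      = a₂ y * K x y + 2 * (a₁ y * f₂ x y) + a y * f₂₂ x y + (q x - p y) * K x y)
    (hbc : ∀ x ∈ Ioo 0 δ, a 0 * f₂ x 0 + a₁ 0 * K x 0 = 0) (hdiag : ∀ t ∈ Icc 0 δ, K t t = 0) :
    ∀ x y, (x, y) ∈ triangle δ → K x y = 0 := by
  set c₀ := a₁ 0 / a 0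
  have hw : ∀ t, HasDerivAt (fun t => Real.exp (c₀ * t)) (c₀ * Real.exp (c₀ * t)) t := fun t =>
    (((hasDerivAt_id t).const_mul c₀).exp).congr_deriv (by simp [mul_comm])
  have hw' : ∀ t, HasDerivAt (fun t => c₀ * Real.exp (c₀ * t)) (c₀ ^ 2 * Real.exp (c₀ * t)) t :=
    fun t => ((hw t).const_mul c₀).congr_deriv (by ring)
  have hV := hK.mul_left (fun t _ => (hw t).hasDerivWithinAt)
    (fun t _ => (hw' t).hasDerivWithinAt) (by fun_prop)
  have := mapsTo_fst_triangle (δ := δ)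
  have := mapsTo_snd_triangle (δ := δ)
  have hac : ContinuousOn a (Icc 0 δ) := fun t ht => (ha t ht).continuousWithinAt
  have ha₁c : ContinuousOn a₁ (Icc 0 δ) := fun t ht => (ha₁ t ht).continuousWithinAt
  have hV0 := hV.eq_zero_of_goursat_neumann hδ ha ha₁c hapos
    (b := fun y => 2 * a₁ y - 2 * c₀ * a y)
    (c := fun x y => a₂ y + q x - p y - 2 * c₀ * a₁ y + c₀ ^ 2 * a y) (by fun_prop)
    (by fun_prop (disch := assumption))
    (fun x y h => by linear_combination Real.exp (c₀ * y) * hpde x y h)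
    (fun x hx => ?_) (fun t ht => by simp [hdiag t ht])
  · intro x y h
    simpa [Real.exp_ne_zero] using hV0 x y h
  · have ha0 := (hapos 0 ⟨le_rfl, hδ.le⟩).ne'
    simp only [mul_zero, Real.exp_zero, mul_one, one_mul, c₀]
    field_simp
    linear_combination hbc x hx

end IsTriangleJet

end GoursatUniqueness

open GoursatUniqueness

/-- Uniqueness for the Goursat problem with zero diagonal data on the triangle
`closure Ω_δ = {0 ≤ y ≤ x ≤ δ}`: if `K` satisfies the hyperbolic equation
`a(x)∂ₓ²K − ∂_y²(a(y)K) = (q(x) − p(y))K` in `Ω_δ`, the boundary condition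
`a(0)∂_yK(x,0) + a'(0)K(x,0) = 0` for `0 < x < δ`, and `K(x,x) = 0` on `[0,δ]`,
then `K ≡ 0` on `closure Ω_δ`. -/
theorem stmt_11
    (ℓ : ℝ) (hℓ : 0 < ℓ) (δ : ℝ) (hδ : δ ∈ Ioc (0:ℝ) ℓ)
    (p q a : ℝ → ℝ)
    (hp : ContDiffOn ℝ 1 p (Icc 0 ℓ)) (hq : ContDiffOn ℝ 1 q (Icc 0 ℓ))
    (ha : ContDiffOn ℝ 2 a (Icc 0 ℓ)) (hapos : ∀ x ∈ Icc (0:ℝ) ℓ, 0 < a x)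
    (K : ℝ → ℝ → ℝ)
    (hKreg : ContDiffOn ℝ 2 (fun z : ℝ × ℝ => K z.1 z.2)
      {z : ℝ × ℝ | 0 ≤ z.2 ∧ z.2 ≤ z.1 ∧ z.1 ≤ δ})
    (hKpde : ∀ x y : ℝ, 0 < y → y < x → x < δ →
      a x * deriv (fun s => deriv (fun s' => K s' y) s) x
        - deriv (fun s => deriv (fun s' => a s' * K x s') s) y
        = (q x - p y) * K x y)
    (hKbc : ∀ x : ℝ, 0 < x → x < δ →
      a 0 * derivWithin (fun s => K x s) (Icc 0 x) 0
        + derivWithin a (Icc 0 ℓ) 0 * K x 0 = 0)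
    (hKdiag : ∀ x ∈ Icc (0:ℝ) δ, K x x = 0) :
    ∀ x y : ℝ, 0 ≤ y → y ≤ x → x ≤ δ → K x y = 0 := by
  obtain ⟨hδ0, hδℓ⟩ := hδ
  have hsub : Icc 0 δ ⊆ Icc 0 ℓ := Icc_subset_Icc le_rfl hδℓ
  have ha' : ContDiffOn ℝ 1 (derivWithin a (Icc 0 ℓ)) (Icc 0 ℓ) :=
    ha.derivWithin (uniqueDiffOn_Icc hℓ) (by norm_num)
  have hda : ∀ t ∈ Icc 0 δ, HasDerivWithinAt a (derivWithin a (Icc 0 ℓ) t) (Icc 0 δ) t :=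
    fun t ht => ((ha.differentiableOn (by norm_num) t (hsub ht)).hasDerivWithinAt).mono hsub
  have hda' : ∀ t ∈ Icc 0 δ, HasDerivWithinAt (derivWithin a (Icc 0 ℓ))
      (derivWithin (derivWithin a (Icc 0 ℓ)) (Icc 0 ℓ) t) (Icc 0 δ) t :=
    fun t ht => ((ha'.differentiableOn one_ne_zero t (hsub ht)).hasDerivWithinAt).mono hsub
  have hda'' := (ha'.continuousOn_derivWithin (uniqueDiffOn_Icc hℓ) le_rfl).mono hsub
  obtain ⟨f₁, f₂, f₁₁, f₁₂, f₂₂, hK⟩ := exists_isTriangleJet_of_contDiffOn hδ0 hKreg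
  intro x y hy hyx hxδ
  exact hK.eq_zero_of_goursat_robin hδ0 hda hda' hda'' (fun t ht => hapos t (hsub ht))
    (hp.continuousOn.mono hsub) (hq.continuousOn.mono hsub)
    (fun x y h => hK.pde_of_deriv_slices hda hda' hda'' hKpde h)
    (fun x hx => hK.derivWithin_snd_zero ⟨hx.1, hx.2.le⟩ ▸ hKbc x hx.1 hx.2)
    hKdiag x y ⟨hy, hyx, hxδ⟩
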